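/- arXiv:2605.26881 — 6 statements merged into one kernel-verified Lean document; each statement's English description precedes it below -/
import Mathlib

section
/- Fix m_f ∈ ℝ^{d_X}, a symmetric positive definite d_X × d_X real matrix P_f, a symmetric positive definite d_Y × d_Y real matrix R, a d_Y × d_X real matrix H, a continuously differentiable function k : ℝ^{d_Y} → ℝ, and a point y ∈ ℝ^{d_Y} with k(y) > 0. Define N = (1/(2 k(y)²)) R, the corrected observation ỹ = y − 2 N ∇(k²)(y), the adjusted gain K̃ = P_f Hᵀ (N + H P_f Hᵀ)⁻¹, the analysis covariance P_a = P_f − K̃ H P_f, and the analysis mean m_a = m_f − K̃ (H m_f − ỹ). Then P_a is symmetric positive definite, and there is a constant c > 0, independent of x, such that for every x ∈ ℝ^{d_X}: exp(−(1/2)(x − m_f)ᵀ P_f⁻¹ (x − m_f)) · exp(−L(x)) = c · exp(−(1/2)(x − m_a)ᵀ P_a⁻¹ (x − m_a)), where L(x) is the one-sample diffusion score matching loss L(x) = k(y)² (y − H x)ᵀ R⁻¹ (y − H x) − 2 (y − H x)ᵀ ∇(k²)(y) − 2 d_Y k(y)². -/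
open Matrix

lemma dsm_dotSymm {n : ℕ} (M : Matrix (Fin n) (Fin n) ℝ) (hM : Mᵀ = M) (v w : Fin n → ℝ) :
    v ⬝ᵥ M *ᵥ w = w ⬝ᵥ M *ᵥ v := by
  rw [dotProduct_mulVec, ← mulVec_transpose, hM, dotProduct_comm]

lemma dsm_hDot {m n : ℕ} (H : Matrix (Fin m) (Fin n) ℝ) (x : Fin n → ℝ) (u : Fin m → ℝ) :
    (H *ᵥ x) ⬝ᵥ u = x ⬝ᵥ (Hᵀ *ᵥ u) := by
  rw [dotProduct_comm, dotProduct_mulVec, ← mulVec_transpose, dotProduct_comm]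

lemma dsm_quadExpand {n : ℕ} (M : Matrix (Fin n) (Fin n) ℝ) (hM : Mᵀ = M) (a b : Fin n → ℝ) :
    (a - b) ⬝ᵥ M *ᵥ (a - b) = a ⬝ᵥ M *ᵥ a - 2 * (a ⬝ᵥ M *ᵥ b) + b ⬝ᵥ M *ᵥ b := by
  rw [mulVec_sub, dotProduct_sub, sub_dotProduct, sub_dotProduct, dsm_dotSymm M hM b a]
  ring

/-- Gaussian conjugacy of the diffusion score matching posterior: the product of the
Gaussian forecast density kernel and the exponentiated negative one-sample DSM loss is,
up to a positive constant, the Gaussian density kernel with the DSM analysis mean and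
covariance; moreover the analysis covariance is symmetric positive definite. -/
theorem dsm_gaussian_conjugacy {dX dY : ℕ}
    (mf : Fin dX → ℝ) (Pf : Matrix (Fin dX) (Fin dX) ℝ) (hPf : Pf.PosDef)
    (R : Matrix (Fin dY) (Fin dY) ℝ) (hR : R.PosDef)
    (H : Matrix (Fin dY) (Fin dX) ℝ)
    (k : (Fin dY → ℝ) → ℝ) (hk : ContDiff ℝ 1 k)
    (y : Fin dY → ℝ) (hky : 0 < k y)
    (gk : Fin dY → ℝ)
    (hgk : gk = fun i => fderiv ℝ (fun z => (k z) ^ 2) y (Pi.single i 1))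
    (N : Matrix (Fin dY) (Fin dY) ℝ) (hN : N = (1 / (2 * (k y) ^ 2)) • R)
    (ytil : Fin dY → ℝ) (hytil : ytil = y - (2 : ℝ) • N.mulVec gk)
    (K : Matrix (Fin dX) (Fin dY) ℝ) (hK : K = Pf * Hᵀ * (N + H * Pf * Hᵀ)⁻¹)
    (Pa : Matrix (Fin dX) (Fin dX) ℝ) (hPa : Pa = Pf - K * H * Pf)
    (ma : Fin dX → ℝ) (hma : ma = mf - K.mulVec (H.mulVec mf - ytil))
    (Lx : (Fin dX → ℝ) → ℝ)
    (hLx : Lx = fun x =>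
      (k y) ^ 2 * ((y - H.mulVec x) ⬝ᵥ R⁻¹.mulVec (y - H.mulVec x))
        - 2 * ((y - H.mulVec x) ⬝ᵥ gk) - 2 * (dY : ℝ) * (k y) ^ 2) :
    Pa.PosDef ∧ ∃ c : ℝ, 0 < c ∧ ∀ x : Fin dX → ℝ,
      Real.exp (-(1 / 2) * ((x - mf) ⬝ᵥ Pf⁻¹.mulVec (x - mf))) * Real.exp (-(Lx x))
        = c * Real.exp (-(1 / 2) * ((x - ma) ⬝ᵥ Pa⁻¹.mulVec (x - ma))) := by
  have hky2 : (0:ℝ) < k y ^ 2 := by positivity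
  have hRsymm : Rᵀ = R := (conjTranspose_eq_transpose_of_trivial R).symm.trans hR.1.eq
  -- N is positive definite
  have hNpd : N.PosDef := by
    rw [hN]
    refine PosDef.of_dotProduct_mulVec_pos ?_ (fun x hx => ?_)
    · show _ᴴ = _
      rw [conjTranspose_smul]
      simp [hRsymm, hR.1.eq]
    · rw [smul_mulVec, dotProduct_smul, smul_eq_mul]
      exact mul_pos (by positivity) (hR.dotProduct_mulVec_pos hx)
  have hHPfH : (H * Pf * Hᵀ).PosSemidef := by
    have h := hPf.posSemidef.mul_mul_conjTranspose_same H
    rwa [conjTranspose_eq_transpose_of_trivial] at h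
  have hVpsd : (Hᵀ * N⁻¹ * H).PosSemidef := by
    have h := hNpd.inv.posSemidef.conjTranspose_mul_mul_same H
    rwa [conjTranspose_eq_transpose_of_trivial] at h
  have hSpd : (N + H * Pf * Hᵀ).PosDef :=
    PosDef.of_dotProduct_mulVec_pos (hNpd.1.add hHPfH.1) fun x hx => by
      rw [add_mulVec, dotProduct_add]
      exact add_pos_of_pos_of_nonneg (hNpd.dotProduct_mulVec_pos hx) (hHPfH.dotProduct_mulVec_nonneg x)
  have hApd : (Pf⁻¹ + Hᵀ * N⁻¹ * H).PosDef :=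
    PosDef.of_dotProduct_mulVec_pos (hPf.inv.1.add hVpsd.1) fun x hx => by
      rw [add_mulVec, dotProduct_add]
      exact add_pos_of_pos_of_nonneg (hPf.inv.dotProduct_mulVec_pos hx) (hVpsd.dotProduct_mulVec_nonneg x)
  have hPfu : IsUnit Pf.det := isUnit_iff_ne_zero.2 hPf.det_pos.ne'
  have hNu : IsUnit N.det := isUnit_iff_ne_zero.2 hNpd.det_pos.ne'
  have hSu : IsUnit (N + H * Pf * Hᵀ).det := isUnit_iff_ne_zero.2 hSpd.det_pos.ne'
  have hPfPf' : Pf⁻¹ * Pf = 1 := nonsing_inv_mul _ hPfu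
  have hNN : N * N⁻¹ = 1 := mul_nonsing_inv _ hNu
  have hNN' : N⁻¹ * N = 1 := nonsing_inv_mul _ hNu
  have hSS : (N + H * Pf * Hᵀ) * (N + H * Pf * Hᵀ)⁻¹ = 1 := mul_nonsing_inv _ hSu
  -- N⁻¹ explicitly
  have hNinv : N⁻¹ = (2 * k y ^ 2) • R⁻¹ := by
    apply inv_eq_left_inv
    rw [hN, smul_mul_smul_comm]
    rw [nonsing_inv_mul _ (isUnit_iff_ne_zero.2 hR.det_pos.ne')]
    rw [show (2 * k y ^ 2) * (1 / (2 * k y ^ 2)) = 1 by field_simp]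
    simp
  -- key gain identity
  have keyK : (Pf⁻¹ + Hᵀ * N⁻¹ * H) * K = Hᵀ * N⁻¹ := by
    rw [hK]
    have h1 : (Pf⁻¹ + Hᵀ * N⁻¹ * H) * (Pf * Hᵀ) = Hᵀ * N⁻¹ * (N + H * Pf * Hᵀ) := by
      rw [Matrix.add_mul, ← Matrix.mul_assoc Pf⁻¹ Pf Hᵀ, hPfPf', Matrix.one_mul,
        Matrix.mul_add, Matrix.mul_assoc Hᵀ N⁻¹ N, hNN', Matrix.mul_one]
      simp [Matrix.mul_assoc]
    calc (Pf⁻¹ + Hᵀ * N⁻¹ * H) * (Pf * Hᵀ * (N + H * Pf * Hᵀ)⁻¹)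
        = ((Pf⁻¹ + Hᵀ * N⁻¹ * H) * (Pf * Hᵀ)) * (N + H * Pf * Hᵀ)⁻¹ :=
          (Matrix.mul_assoc _ _ _).symm
      _ = Hᵀ * N⁻¹ * ((N + H * Pf * Hᵀ) * (N + H * Pf * Hᵀ)⁻¹) := by
          rw [h1, Matrix.mul_assoc]
      _ = Hᵀ * N⁻¹ := by rw [hSS, Matrix.mul_one]
  -- inverse of Pa
  have expand : (Pf⁻¹ + Hᵀ * N⁻¹ * H) * Pa = 1 := by
    rw [hPa, Matrix.mul_sub, Matrix.add_mul, hPfPf',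
      ← Matrix.mul_assoc (Pf⁻¹ + Hᵀ * N⁻¹ * H) (K * H) Pf,
      ← Matrix.mul_assoc (Pf⁻¹ + Hᵀ * N⁻¹ * H) K H, keyK]
    abel
  have hPainv : Pa⁻¹ = Pf⁻¹ + Hᵀ * N⁻¹ * H := inv_eq_left_inv expand
  have hPaPD : Pa.PosDef := (inv_eq_right_inv expand) ▸ hApd.inv
  -- symmetry facts
  have hPfS : Pf⁻¹ᵀ = Pf⁻¹ :=
    (conjTranspose_eq_transpose_of_trivial _).symm.trans hPf.inv.1.eq
  have hRS : R⁻¹ᵀ = R⁻¹ :=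
    (conjTranspose_eq_transpose_of_trivial _).symm.trans hR.inv.1.eq
  have hPaS : Pa⁻¹ᵀ = Pa⁻¹ :=
    (conjTranspose_eq_transpose_of_trivial _).symm.trans hPaPD.inv.1.eq
  -- mean identity
  have h4 : (Hᵀ * N⁻¹) *ᵥ ytil = (2 * k y ^ 2) • (Hᵀ *ᵥ (R⁻¹ *ᵥ y)) - (2:ℝ) • (Hᵀ *ᵥ gk) := by
    rw [hytil, mulVec_sub, mulVec_smul, mulVec_mulVec, Matrix.mul_assoc Hᵀ N⁻¹ N,
      hNN', Matrix.mul_one]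
    congr 1
    rw [hNinv, Matrix.mul_smul, smul_mulVec, ← mulVec_mulVec]
  have hVecMa : Pa⁻¹ *ᵥ ma =
      Pf⁻¹ *ᵥ mf + ((2 * k y ^ 2) • (Hᵀ *ᵥ (R⁻¹ *ᵥ y)) - (2:ℝ) • (Hᵀ *ᵥ gk)) := by
    rw [hPainv, hma, mulVec_sub, add_mulVec, mulVec_mulVec, keyK, mulVec_sub,
      mulVec_mulVec, h4]
    abel
  -- quadratic form identity (matrix part)
  have hPainv2 : Pa⁻¹ = Pf⁻¹ + (2 * k y ^ 2) • (Hᵀ * R⁻¹ * H) := by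
    rw [hPainv, hNinv, Matrix.mul_smul, Matrix.smul_mul]
  refine ⟨hPaPD, Real.exp (-(1/2) * (mf ⬝ᵥ Pf⁻¹ *ᵥ mf)
      - (k y ^ 2 * (y ⬝ᵥ R⁻¹ *ᵥ y) - 2 * (y ⬝ᵥ gk) - 2 * (dY:ℝ) * k y ^ 2)
      + (1/2) * (ma ⬝ᵥ Pa⁻¹ *ᵥ ma)), Real.exp_pos _, fun x => ?_⟩
  rw [← Real.exp_add, ← Real.exp_add]
  congr 1
  have e1 := dsm_quadExpand Pf⁻¹ hPfS x mf
  have e2 := dsm_quadExpand Pa⁻¹ hPaS x ma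
  have e3 : (y - H *ᵥ x) ⬝ᵥ R⁻¹ *ᵥ (y - H *ᵥ x)
      = y ⬝ᵥ R⁻¹ *ᵥ y - 2 * (x ⬝ᵥ Hᵀ *ᵥ (R⁻¹ *ᵥ y)) + x ⬝ᵥ Hᵀ *ᵥ (R⁻¹ *ᵥ (H *ᵥ x)) := by
    rw [dsm_quadExpand R⁻¹ hRS y (H *ᵥ x), dsm_dotSymm R⁻¹ hRS y (H *ᵥ x),
      dsm_hDot H x (R⁻¹ *ᵥ y), dsm_hDot H x (R⁻¹ *ᵥ (H *ᵥ x))]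
  have e4 : (y - H *ᵥ x) ⬝ᵥ gk = y ⬝ᵥ gk - x ⬝ᵥ (Hᵀ *ᵥ gk) := by
    rw [sub_dotProduct, dsm_hDot]
  have e5 : x ⬝ᵥ Pa⁻¹ *ᵥ x
      = x ⬝ᵥ Pf⁻¹ *ᵥ x + (2 * k y ^ 2) * (x ⬝ᵥ Hᵀ *ᵥ (R⁻¹ *ᵥ (H *ᵥ x))) := by
    rw [hPainv2, add_mulVec, dotProduct_add, smul_mulVec, dotProduct_smul,
      smul_eq_mul]
    congr 2
    rw [← mulVec_mulVec, ← mulVec_mulVec]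
  have e6 : x ⬝ᵥ Pa⁻¹ *ᵥ ma
      = x ⬝ᵥ Pf⁻¹ *ᵥ mf + ((2 * k y ^ 2) * (x ⬝ᵥ Hᵀ *ᵥ (R⁻¹ *ᵥ y))
        - 2 * (x ⬝ᵥ Hᵀ *ᵥ gk)) := by
    rw [hVecMa, dotProduct_add, dotProduct_sub, dotProduct_smul, dotProduct_smul,
      smul_eq_mul, smul_eq_mul]
  simp only [hLx]
  rw [e1, e2, e3, e4, e5, e6]
  ring
end

section
/- Fix a symmetric positive definite d_Y × d_Y real matrix R, a d_Y × d_X real matrix H, a continuously differentiable function k : ℝ^{d_Y} → ℝ, and a point y ∈ ℝ^{d_Y} with k(y) > 0. Define N = (1/(2 k(y)²)) R and the corrected observation ỹ = y − 2 N ∇(k²)(y). Then for every x ∈ ℝ^{d_X}, the one-sample diffusion score matching loss L(x) = k(y)² (y − H x)ᵀ R⁻¹ (y − H x) − 2 (y − H x)ᵀ ∇(k²)(y) − 2 d_Y k(y)² decomposes as L(x) = (1/2) xᵀ Hᵀ N⁻¹ H x − xᵀ Hᵀ N⁻¹ ỹ + C, where the constant C = k(y)² yᵀ R⁻¹ y −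 2 yᵀ ∇(k²)(y) − 2 d_Y k(y)² does not depend on x. -/
/-!
Since `N⁻¹ = 2 k(y)² R⁻¹`, both sides are polynomials in `x` built from the symmetric form
`R⁻¹`: expanding `(y - Hx)ᵀ R⁻¹ (y - Hx)` gives the quadratic and cross terms, and the correction
`-2 N ∇(k²)(y)` in `ỹ` is turned by `N⁻¹` into exactly the term `2 (Hx)ᵀ ∇(k²)(y)` of the loss.
-/

open Matrix

namespace Matrix

variable {m n α : Type*} [Fintype m]

lemma IsSymm.dotProduct_mulVec_comm [CommSemiring α] {M : Matrix m m α} (hM : M.IsSymm)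
    (u v : m → α) : u ⬝ᵥ M *ᵥ v = v ⬝ᵥ M *ᵥ u := by
  simpa only [hM.eq] using dotProduct_transpose_mulVec M u v

lemma IsSymm.sub_mulVec_dotProduct_mulVec_sub [Fintype n] [CommRing α] {M : Matrix m m α}
    (hM : M.IsSymm) (H : Matrix m n α) (y : m → α) (x : n → α) :
    (y - H *ᵥ x) ⬝ᵥ M *ᵥ (y - H *ᵥ x)
      = x ⬝ᵥ (Hᵀ * M * H) *ᵥ x - 2 * (x ⬝ᵥ (Hᵀ * M) *ᵥ y) + y ⬝ᵥ M *ᵥ y := by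
  have hquad : x ⬝ᵥ (Hᵀ * M * H) *ᵥ x = H *ᵥ x ⬝ᵥ M *ᵥ (H *ᵥ x) := by
    rw [← mulVec_mulVec, ← mulVec_mulVec, dotProduct_transpose_mulVec, dotProduct_comm]
  have hcross : x ⬝ᵥ (Hᵀ * M) *ᵥ y = H *ᵥ x ⬝ᵥ M *ᵥ y := by
    rw [← mulVec_mulVec, dotProduct_transpose_mulVec, dotProduct_comm]
  rw [hquad, hcross, mulVec_sub, sub_dotProduct, dotProduct_sub, dotProduct_sub,
    hM.dotProduct_mulVec_comm y (H *ᵥ x)]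
  ring

lemma mul_nonsing_inv_mulVec_mulVec [CommRing α] [DecidableEq m] (A : Matrix n m α)
    {N : Matrix m m α} (hN : IsUnit N.det) (v : m → α) :
    (A * N⁻¹) *ᵥ (N *ᵥ v) = A *ᵥ v := by
  rw [mulVec_mulVec, nonsing_inv_mul_cancel_right N A hN]

lemma inv_smul_of_ne_zero {K : Type*} [Field K] [DecidableEq m] {a : K} (ha : a ≠ 0)
    {A : Matrix m m K} (hA : IsUnit A.det) : (a • A)⁻¹ = a⁻¹ • A⁻¹ :=
  inv_smul' A (Units.mk0 a ha) hA

end Matrix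

theorem dsm_loss_decomposition_general {dX dY : ℕ}
    (R : Matrix (Fin dY) (Fin dY) ℝ) (hR : R.PosDef)
    (H : Matrix (Fin dY) (Fin dX) ℝ)
    (k : (Fin dY → ℝ) → ℝ)
    (y : Fin dY → ℝ) (hky : 0 < k y)
    (gk : Fin dY → ℝ)
    (N : Matrix (Fin dY) (Fin dY) ℝ) (hN : N = (1 / (2 * (k y) ^ 2)) • R)
    (ytil : Fin dY → ℝ) (hytil : ytil = y - (2 : ℝ) • N.mulVec gk)
    (Lx : (Fin dX → ℝ) → ℝ)
    (hLx : Lx = fun x =>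
      (k y) ^ 2 * ((y - H.mulVec x) ⬝ᵥ R⁻¹.mulVec (y - H.mulVec x))
        - 2 * ((y - H.mulVec x) ⬝ᵥ gk) - 2 * (dY : ℝ) * (k y) ^ 2)
    (C : ℝ)
    (hC : C = (k y) ^ 2 * (y ⬝ᵥ R⁻¹.mulVec y) - 2 * (y ⬝ᵥ gk) - 2 * (dY : ℝ) * (k y) ^ 2) :
    ∀ x : Fin dX → ℝ,
      Lx x = (1 / 2) * (x ⬝ᵥ (Hᵀ * N⁻¹ * H).mulVec x)
        - x ⬝ᵥ (Hᵀ * N⁻¹).mulVec ytil + C := by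
  intro x
  subst hLx hC hytil
  have hRdet : IsUnit R.det := (isUnit_iff_isUnit_det R).1 hR.isUnit
  have hNdet : IsUnit N.det := by
    rw [hN, det_smul]
    exact (IsUnit.mk0 _ (by positivity)).mul hRdet
  have hNinv : N⁻¹ = (2 * k y ^ 2) • R⁻¹ := by
    rw [hN, inv_smul_of_ne_zero (by positivity) hRdet, one_div, inv_inv]
  have hRinv : R⁻¹.IsSymm := isHermitian_iff_isSymm.1 hR.inv.isHermitian
  have hquad : Hᵀ * N⁻¹ * H = (2 * k y ^ 2) • (Hᵀ * R⁻¹ * H) := by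
    rw [hNinv, Matrix.mul_smul, Matrix.smul_mul]
  have hlin : (Hᵀ * N⁻¹) *ᵥ (y - (2 : ℝ) • N *ᵥ gk)
      = (2 * k y ^ 2) • ((Hᵀ * R⁻¹) *ᵥ y) - (2 : ℝ) • Hᵀ *ᵥ gk := by
    rw [mulVec_sub, mulVec_smul, mul_nonsing_inv_mulVec_mulVec _ hNdet, hNinv, Matrix.mul_smul,
      smul_mulVec]
  dsimp only
  rw [hquad, hlin, hRinv.sub_mulVec_dotProduct_mulVec_sub, sub_dotProduct]
  simp only [smul_mulVec, dotProduct_smul, dotProduct_sub, smul_eq_mul,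
    dotProduct_transpose_mulVec H x gk, dotProduct_comm gk]
  ring

/-- Decomposition of the one-sample diffusion score matching loss into a quadratic form
in `x` plus a constant: `L(x) = (1/2) xᵀ Hᵀ N⁻¹ H x − xᵀ Hᵀ N⁻¹ ỹ + C`. -/
theorem dsm_loss_decomposition {dX dY : ℕ}
    (R : Matrix (Fin dY) (Fin dY) ℝ) (hR : R.PosDef)
    (H : Matrix (Fin dY) (Fin dX) ℝ)
    (k : (Fin dY → ℝ) → ℝ) (hk : ContDiff ℝ 1 k)
    (y : Fin dY → ℝ) (hky : 0 < k y)
    (gk : Fin dY → ℝ)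
    (hgk : gk = fun i => fderiv ℝ (fun z => (k z) ^ 2) y (Pi.single i 1))
    (N : Matrix (Fin dY) (Fin dY) ℝ) (hN : N = (1 / (2 * (k y) ^ 2)) • R)
    (ytil : Fin dY → ℝ) (hytil : ytil = y - (2 : ℝ) • N.mulVec gk)
    (Lx : (Fin dX → ℝ) → ℝ)
    (hLx : Lx = fun x =>
      (k y) ^ 2 * ((y - H.mulVec x) ⬝ᵥ R⁻¹.mulVec (y - H.mulVec x))
        - 2 * ((y - H.mulVec x) ⬝ᵥ gk) - 2 * (dY : ℝ) * (k y) ^ 2)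
    (C : ℝ)
    (hC : C = (k y) ^ 2 * (y ⬝ᵥ R⁻¹.mulVec y) - 2 * (y ⬝ᵥ gk) - 2 * (dY : ℝ) * (k y) ^ 2) :
    ∀ x : Fin dX → ℝ,
      Lx x = (1 / 2) * (x ⬝ᵥ (Hᵀ * N⁻¹ * H).mulVec x)
        - x ⬝ᵥ (Hᵀ * N⁻¹).mulVec ytil + C :=
  dsm_loss_decomposition_general R hR H k y hky gk N hN ytil hytil Lx hLx C hC
end

section
/- Let Σ and R be symmetric positive definite d_Y × d_Y real matrices, a ∈ ℝ^{d_Y}, q > 0, let h : ℝ^{d_X} → ℝ^{d_Y} be an arbitrary function, and let k be the inverse multiquadric kernel k(y) = (1 + (y − a)ᵀ Σ⁻¹ (y − a)/q²)^{−1/2}. Then there exist constants c₁, c₂, c₃ ≥ 0 such that for all x ∈ ℝ^{d_X} and all y ∈ ℝ^{d_Y}, the one-sample diffusion score matching loss with nonlinear observation operator satisfies |k(y)² (y − h(x))ᵀ R⁻¹ (y − h(x)) − 2 (y − h(x))ᵀ ∇(k²)(y) − 2 d_Y k(y)²| ≤ c₁ ‖h(x)‖₂² + c₂ ‖h(x)‖₂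 + c₃, uniformly in y. -/
open Matrix

noncomputable def ee {n : ℕ} (v : Fin n → ℝ) : EuclideanSpace ℝ (Fin n) :=
  (WithLp.equiv 2 _).symm v

lemma inner_ee {n : ℕ} (v w : Fin n → ℝ) : @inner ℝ _ _ (ee v) (ee w) = v ⬝ᵥ w := by
  simp [ee, PiLp.inner_apply, dotProduct, RCLike.inner_apply, mul_comm]

lemma norm_ee_sq {n : ℕ} (v : Fin n → ℝ) : ‖ee v‖ ^ 2 = v ⬝ᵥ v := by
  rw [← real_inner_self_eq_norm_sq, inner_ee]

lemma sqrt_dot {n : ℕ} (v : Fin n → ℝ) : Real.sqrt (v ⬝ᵥ v) = ‖ee v‖ := by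
  rw [← norm_ee_sq, Real.sqrt_sq (norm_nonneg _)]

lemma clm_ee {n : ℕ} (A : Matrix (Fin n) (Fin n) ℝ) (v : Fin n → ℝ) :
    Matrix.toEuclideanCLM (𝕜 := ℝ) A (ee v) = ee (A *ᵥ v) := by
  simp [ee, Matrix.toEuclideanCLM_toLp]

lemma dot_mulVec_le {n : ℕ} (A : Matrix (Fin n) (Fin n) ℝ) (u v : Fin n → ℝ) :
    |u ⬝ᵥ A *ᵥ v| ≤ ‖Matrix.toEuclideanCLM (𝕜 := ℝ) A‖ * ‖ee u‖ * ‖ee v‖ := by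
  rw [← inner_ee, ← clm_ee]
  calc |@inner ℝ _ _ (ee u) (Matrix.toEuclideanCLM (𝕜 := ℝ) A (ee v))|
      ≤ ‖ee u‖ * ‖Matrix.toEuclideanCLM (𝕜 := ℝ) A (ee v)‖ := abs_real_inner_le_norm _ _
    _ ≤ ‖ee u‖ * (‖Matrix.toEuclideanCLM (𝕜 := ℝ) A‖ * ‖ee v‖) := by
        gcongr; exacts [(Matrix.toEuclideanCLM (𝕜 := ℝ) A).le_opNorm _]
    _ = _ := by ring

lemma dot_symm {n : ℕ} {B : Matrix (Fin n) (Fin n) ℝ} (hB : B.IsHermitian)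
    (u v : Fin n → ℝ) : u ⬝ᵥ B *ᵥ v = v ⬝ᵥ B *ᵥ u := by
  have hBt : Bᵀ = B := by
    have := hB.eq; rwa [Matrix.conjTranspose_eq_transpose_of_trivial] at this
  rw [Matrix.dotProduct_mulVec, ← hBt, Matrix.vecMul_transpose, hBt, dotProduct_comm]

lemma quad_nonneg {n : ℕ} {B : Matrix (Fin n) (Fin n) ℝ} (hB : B.PosDef)
    (v : Fin n → ℝ) : 0 ≤ v ⬝ᵥ B *ᵥ v := by
  rcases eq_or_ne v 0 with rfl | hv
  · simp
  · have := hB.re_dotProduct_pos hv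
    simpa using this.le

open scoped MatrixOrder in
lemma posdef_lower {n : ℕ} {B : Matrix (Fin n) (Fin n) ℝ} (hB : B.PosDef) (hn : 0 < n) :
    ∃ m : ℝ, 0 < m ∧ ∀ v : Fin n → ℝ, m * ‖ee v‖ ^ 2 ≤ v ⬝ᵥ B *ᵥ v := by
  have hps := hB.posSemidef
  set C := CFC.sqrt B with hC
  have hCsq : C * C = B := CFC.sqrt_mul_sqrt_self B (Matrix.nonneg_iff_posSemidef.2 hps)
  have hCherm : C.IsHermitian := (Matrix.nonneg_iff_posSemidef.1 (CFC.sqrt_nonneg B)).1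
  have hdetB : B.det ≠ 0 := ne_of_gt hB.det_pos
  have hdetC : IsUnit C.det := by
    have : C.det * C.det = B.det := by rw [← Matrix.det_mul, hCsq]
    refine isUnit_iff_ne_zero.2 fun h0 => hdetB ?_
    rw [← this, h0, mul_zero]
  have hinv : ∀ v : Fin n → ℝ, C⁻¹ *ᵥ (C *ᵥ v) = v := by
    intro v; rw [Matrix.mulVec_mulVec, Matrix.nonsing_inv_mul _ hdetC, Matrix.one_mulVec]
  set N := ‖Matrix.toEuclideanCLM (𝕜 := ℝ) C⁻¹‖ with hN
  have hkey : ∀ v : Fin n → ℝ, ‖ee v‖ ≤ N * ‖ee (C *ᵥ v)‖ := by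
    intro v
    have : ee v = Matrix.toEuclideanCLM (𝕜 := ℝ) C⁻¹ (ee (C *ᵥ v)) := by
      rw [clm_ee, hinv]
    rw [this]; exact (Matrix.toEuclideanCLM (𝕜 := ℝ) C⁻¹).le_opNorm _
  have hNpos : 0 < N := by
    obtain ⟨i⟩ : Nonempty (Fin n) := ⟨⟨0, hn⟩⟩
    have h1 : (0:ℝ) < ‖ee (Pi.single i 1 : Fin n → ℝ)‖ := by
      rw [norm_pos_iff]
      intro h0
      have : (Pi.single i 1 : Fin n → ℝ) = 0 := by
        have := congrArg (WithLp.equiv 2 (Fin n → ℝ)) h0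
        simpa [ee] using this
      have h1 := congrFun this i
      simp [Pi.single_apply] at h1
    have h2 := hkey (Pi.single i 1)
    nlinarith [norm_nonneg (ee (C *ᵥ Pi.single i 1))]
  refine ⟨(N ^ 2)⁻¹, by positivity, fun v => ?_⟩
  have hq : v ⬝ᵥ B *ᵥ v = ‖ee (C *ᵥ v)‖ ^ 2 := by
    rw [norm_ee_sq, ← hCsq, ← Matrix.mulVec_mulVec, dot_symm hCherm v (C *ᵥ v)]
  rw [hq]
  have h3 := hkey v
  have h4 : ‖ee v‖ ^ 2 ≤ N ^ 2 * ‖ee (C *ᵥ v)‖ ^ 2 := by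
    nlinarith [norm_nonneg (ee v), norm_nonneg (ee (C *ᵥ v))]
  rw [inv_mul_le_iff₀ (by positivity)]
  linarith

lemma quad_fderiv {n : ℕ} {B : Matrix (Fin n) (Fin n) ℝ} (hB : B.IsHermitian)
    (a : Fin n → ℝ) (q : ℝ) (y : Fin n → ℝ)
    (hgy : (1 + ((y - a) ⬝ᵥ B *ᵥ (y - a)) / q ^ 2) ≠ 0) (v : Fin n → ℝ) :
    fderiv ℝ (fun z => (1 + ((z - a) ⬝ᵥ B *ᵥ (z - a)) / q ^ 2)⁻¹) y v
      = -(((1 + ((y - a) ⬝ᵥ B *ᵥ (y - a)) / q ^ 2) ^ 2)⁻¹) * (2 / q ^ 2)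
          * (v ⬝ᵥ B *ᵥ (y - a)) := by
  classical
  set T := Matrix.toEuclideanCLM (𝕜 := ℝ) B with hT
  set D := ((PiLp.continuousLinearEquiv 2 ℝ (fun _ : Fin n => ℝ)).symm :
      (Fin n → ℝ) →L[ℝ] EuclideanSpace ℝ (Fin n)) with hD
  have hDapp : ∀ z : Fin n → ℝ, D z = ee z := fun z => rfl
  have hf : HasFDerivAt (fun z : Fin n → ℝ => ee (z - a)) D y := by
    have h1 : HasFDerivAt (fun z : Fin n → ℝ => z - a)
        (ContinuousLinearMap.id ℝ (Fin n → ℝ)) y := (hasFDerivAt_id y).sub_const a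
    have h2 := D.hasFDerivAt.comp y h1
    exact h2
  have hTf : HasFDerivAt (fun z : Fin n → ℝ => T (ee (z - a))) (T.comp D) y :=
    T.hasFDerivAt.comp y hf
  have hQ : HasFDerivAt (fun z : Fin n → ℝ => ((z - a) ⬝ᵥ B *ᵥ (z - a)))
      ((fderivInnerCLM ℝ (ee (y - a), T (ee (y - a)))).comp (D.prod (T.comp D))) y := by
    have := hf.inner (𝕜 := ℝ) hTf
    have heq : (fun z : Fin n → ℝ => @inner ℝ _ _ (ee (z - a)) (T (ee (z - a))))
        = fun z : Fin n → ℝ => ((z - a) ⬝ᵥ B *ᵥ (z - a)) := by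
      funext z; rw [hT, clm_ee, inner_ee]
    rwa [heq] at this
  have hg : HasFDerivAt (fun z : Fin n → ℝ => 1 + ((z - a) ⬝ᵥ B *ᵥ (z - a)) / q ^ 2)
      ((q ^ 2)⁻¹ • ((fderivInnerCLM ℝ (ee (y - a), T (ee (y - a)))).comp
        (D.prod (T.comp D)))) y := by
    have := (hQ.const_smul ((q ^ 2)⁻¹)).const_add 1
    have heq : (fun z : Fin n → ℝ => 1 + (q ^ 2)⁻¹ • ((z - a) ⬝ᵥ B *ᵥ (z - a)))
        = fun z : Fin n → ℝ => 1 + ((z - a) ⬝ᵥ B *ᵥ (z - a)) / q ^ 2 := by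
      funext z; rw [smul_eq_mul]; ring
    simp only [Pi.smul_apply] at this
    rwa [heq] at this
  have hinv : HasFDerivAt (fun z : Fin n → ℝ => (1 + ((z - a) ⬝ᵥ B *ᵥ (z - a)) / q ^ 2)⁻¹)
      ((-(((1 + ((y - a) ⬝ᵥ B *ᵥ (y - a)) / q ^ 2) ^ 2)⁻¹)) •
        ((q ^ 2)⁻¹ • ((fderivInnerCLM ℝ (ee (y - a), T (ee (y - a)))).comp
          (D.prod (T.comp D))))) y :=
    (hasDerivAt_inv hgy).comp_hasFDerivAt y hg
  rw [hinv.fderiv]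
  simp only [ContinuousLinearMap.smul_apply, ContinuousLinearMap.coe_comp', Function.comp_apply,
    ContinuousLinearMap.prod_apply, fderivInnerCLM_apply, smul_eq_mul]
  rw [hDapp, hT, clm_ee, clm_ee, inner_ee, inner_ee, dot_symm hB (y - a) v]
  ring

set_option maxHeartbeats 1000000 in
/-- Uniform-in-`y` bound on the one-sample diffusion score matching loss with a
nonlinear observation operator `h` and the inverse multiquadric weight kernel:
the loss is bounded by a quadratic function of the Euclidean norm of `h x`. -/
theorem dsm_loss_imq_bound_nonlinear {dX dY : ℕ}
    (S R : Matrix (Fin dY) (Fin dY) ℝ) (hS : S.PosDef) (hR : R.PosDef)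
    (a : Fin dY → ℝ) (q : ℝ) (hq : 0 < q)
    (h : (Fin dX → ℝ) → Fin dY → ℝ)
    (k : (Fin dY → ℝ) → ℝ)
    (hk : k = fun y => (1 + ((y - a) ⬝ᵥ S⁻¹.mulVec (y - a)) / q ^ 2) ^ (-(1 : ℝ) / 2))
    (gk : (Fin dY → ℝ) → Fin dY → ℝ)
    (hgk : gk = fun y i => fderiv ℝ (fun z => (k z) ^ 2) y (Pi.single i 1)) :
    ∃ c₁ c₂ c₃ : ℝ, 0 ≤ c₁ ∧ 0 ≤ c₂ ∧ 0 ≤ c₃ ∧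
      ∀ (x : Fin dX → ℝ) (y : Fin dY → ℝ),
        |(k y) ^ 2 * ((y - h x) ⬝ᵥ R⁻¹.mulVec (y - h x))
            - 2 * ((y - h x) ⬝ᵥ gk y) - 2 * (dY : ℝ) * (k y) ^ 2|
          ≤ c₁ * Real.sqrt (h x ⬝ᵥ h x) ^ 2
            + c₂ * Real.sqrt (h x ⬝ᵥ h x) + c₃ := by
  rcases Nat.eq_zero_or_pos dY with hd0 | hd
  · subst hd0
    refine ⟨0, 0, 0, le_refl _, le_refl _, le_refl _, fun x y => ?_⟩
    simp [dotProduct]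
  have hB : (S⁻¹).PosDef := hS.inv
  have hBh : (S⁻¹).IsHermitian := hB.isHermitian
  obtain ⟨m, hm, hmle⟩ := posdef_lower hB hd
  have hq2 : (0:ℝ) < q ^ 2 := by positivity
  set g : (Fin dY → ℝ) → ℝ :=
    fun z => 1 + ((z - a) ⬝ᵥ S⁻¹ *ᵥ (z - a)) / q ^ 2 with hgdef
  have hgz_unfold : ∀ z, g z = 1 + ((z - a) ⬝ᵥ S⁻¹ *ᵥ (z - a)) / q ^ 2 :=
    fun z => rfl
  have hg1 : ∀ z, 1 ≤ g z := by
    intro z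
    have h0 := quad_nonneg hB (z - a)
    have h1 : 0 ≤ ((z - a) ⬝ᵥ S⁻¹ *ᵥ (z - a)) / q ^ 2 := by positivity
    rw [hgz_unfold]; linarith
  have hgpos : ∀ z, 0 < g z := fun z => lt_of_lt_of_le one_pos (hg1 z)
  have hk2 : ∀ z, k z ^ 2 = (g z)⁻¹ := by
    intro z
    rw [hk]
    have hgz := hgpos z
    rw [hgz_unfold z] at hgz ⊢
    rw [← Real.rpow_natCast ((1 + ((z - a) ⬝ᵥ S⁻¹ *ᵥ (z - a)) / q ^ 2) ^ (-(1:ℝ)/2) : ℝ) 2,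
      ← Real.rpow_mul hgz.le]
    norm_num [Real.rpow_neg_one]
  have hfun : (fun z => k z ^ 2) = fun z => (g z)⁻¹ := funext hk2
  -- evaluate the gradient term
  have hgkdot : ∀ (y u : Fin dY → ℝ),
      u ⬝ᵥ gk y = -(((g y) ^ 2)⁻¹) * (2 / q ^ 2) * (u ⬝ᵥ S⁻¹ *ᵥ (y - a)) := by
    intro y u
    have hgky : gk y = fun i =>
        (-(((g y) ^ 2)⁻¹) * (2 / q ^ 2)) * (S⁻¹ *ᵥ (y - a)) i := by
      funext i
      have hne : (1 + ((y - a) ⬝ᵥ S⁻¹ *ᵥ (y - a)) / q ^ 2) ≠ 0 := by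
        have := hgpos y; rw [hgz_unfold y] at this; exact ne_of_gt this
      rw [hgk]
      simp only
      rw [hfun]
      have hfg : (fun z => (g z)⁻¹)
          = fun z : Fin dY → ℝ => (1 + ((z - a) ⬝ᵥ S⁻¹ *ᵥ (z - a)) / q ^ 2)⁻¹ := by
        funext z; rw [hgz_unfold z]
      rw [hfg, quad_fderiv hBh a q y hne (Pi.single i 1), single_dotProduct,
        hgz_unfold y]
      ring
    rw [hgky]
    have : (fun i => (-(((g y) ^ 2)⁻¹) * (2 / q ^ 2)) * (S⁻¹ *ᵥ (y - a)) i)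
        = (-(((g y) ^ 2)⁻¹) * (2 / q ^ 2)) • (S⁻¹ *ᵥ (y - a)) := by
      funext i; simp [smul_eq_mul]
    rw [this, dotProduct_smul, smul_eq_mul]
  -- constants
  set NR := ‖Matrix.toEuclideanCLM (𝕜 := ℝ) R⁻¹‖ with hNR
  set NB := ‖Matrix.toEuclideanCLM (𝕜 := ℝ) S⁻¹‖ with hNB
  set A := ‖ee a‖ with hA
  set cQ := q ^ 2 / m with hcQ
  have hNR0 : 0 ≤ NR := norm_nonneg _
  have hNB0 : 0 ≤ NB := norm_nonneg _
  have hA0 : 0 ≤ A := norm_nonneg _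
  have hcQ0 : 0 < cQ := by positivity
  refine ⟨NR, 2*NR*(1+cQ) + 2*NR*A + (4*NB/q^2)*(1+cQ),
    NR*(cQ + 2*(1+cQ)*A + A^2) + (4*NB/q^2)*(cQ + (1+cQ)*A) + 2*dY,
    hNR0, by positivity, by positivity, fun x y => ?_⟩
  set s := Real.sqrt (h x ⬝ᵥ h x) with hs
  have hseq : s = ‖ee (h x)‖ := sqrt_dot _
  have hs0 : 0 ≤ s := by rw [hseq]; exact norm_nonneg _
  set t := ‖ee (y - a)‖ with ht
  have ht0 : 0 ≤ t := norm_nonneg _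
  set u := y - h x with hu
  set G := (g y)⁻¹ with hG
  have hG0 : 0 ≤ G := le_of_lt (inv_pos.2 (hgpos y))
  have hGg : g y * G = 1 := mul_inv_cancel₀ (ne_of_gt (hgpos y))
  have hG1 : G ≤ 1 := by
    rw [hG]
    exact inv_le_one_of_one_le₀ (hg1 y)
  -- key bound G * t^2 ≤ cQ
  have hmt : m * t ^ 2 ≤ q ^ 2 * g y := by
    have h1 := hmle (y - a)
    have h2 : (y - a) ⬝ᵥ S⁻¹ *ᵥ (y - a) = q ^ 2 * (g y - 1) := by
      rw [hgz_unfold y]; field_simp; ring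
    rw [h2] at h1
    have := hgpos y
    nlinarith
  have hGt2 : G * t ^ 2 ≤ cQ := by
    have h1 : t ^ 2 ≤ cQ * g y := by
      rw [hcQ]
      rw [div_mul_eq_mul_div, le_div_iff₀ hm]
      nlinarith
    calc G * t ^ 2 ≤ G * (cQ * g y) := by
          exact mul_le_mul_of_nonneg_left h1 hG0
      _ = cQ * (g y * G) := by ring
      _ = cQ := by rw [hGg, mul_one]
  have hGt : G * t ≤ 1 + cQ := by
    have h1 : t ≤ 1 + t ^ 2 := by nlinarith
    calc G * t ≤ G * (1 + t ^ 2) := mul_le_mul_of_nonneg_left h1 hG0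
      _ = G + G * t ^ 2 := by ring
      _ ≤ 1 + cQ := add_le_add hG1 hGt2
  -- norm of u
  have huee : ee u = ee (y - a) + (ee a - ee (h x)) := by
    have : u = (y - a) + (a - h x) := by rw [hu]; abel
    rw [this]; rfl
  have hule : ‖ee u‖ ≤ t + (A + s) := by
    rw [huee, hseq]
    have n1 : ‖ee (y - a) + (ee a - ee (h x))‖ ≤ ‖ee (y - a)‖ + ‖ee a - ee (h x)‖ :=
      norm_add_le _ _
    have n2 : ‖ee a - ee (h x)‖ ≤ A + ‖ee (h x)‖ := norm_sub_le _ _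
    linarith
  have hueenn : (0:ℝ) ≤ ‖ee u‖ := norm_nonneg _
  -- matrix bounds
  have hb1 : |u ⬝ᵥ R⁻¹ *ᵥ u| ≤ NR * ‖ee u‖ * ‖ee u‖ := dot_mulVec_le _ _ _
  have hb2 : |u ⬝ᵥ S⁻¹ *ᵥ (y - a)| ≤ NB * ‖ee u‖ * t := dot_mulVec_le _ _ _
  -- rewrite the loss
  have hloss : (k y) ^ 2 * (u ⬝ᵥ R⁻¹ *ᵥ u) - 2 * (u ⬝ᵥ gk y) - 2 * (dY : ℝ) * (k y) ^ 2
      = G * (u ⬝ᵥ R⁻¹ *ᵥ u) + (4 / q ^ 2) * G ^ 2 * (u ⬝ᵥ S⁻¹ *ᵥ (y - a))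
        - 2 * (dY : ℝ) * G := by
    rw [hk2 y, hgkdot y u, hG, inv_pow]
    ring
  rw [hloss]
  -- bound by absolute values
  have edY : (0:ℝ) ≤ 2 * (dY : ℝ) := by positivity
  have habs : |G * (u ⬝ᵥ R⁻¹ *ᵥ u) + (4 / q ^ 2) * G ^ 2 * (u ⬝ᵥ S⁻¹ *ᵥ (y - a))
      - 2 * (dY : ℝ) * G|
      ≤ G * |u ⬝ᵥ R⁻¹ *ᵥ u| + (4 / q ^ 2) * G ^ 2 * |u ⬝ᵥ S⁻¹ *ᵥ (y - a)|
        + 2 * (dY : ℝ) * G := by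
    have he : G * (u ⬝ᵥ R⁻¹ *ᵥ u) + (4 / q ^ 2) * G ^ 2 * (u ⬝ᵥ S⁻¹ *ᵥ (y - a))
        - 2 * (dY : ℝ) * G
        = G * (u ⬝ᵥ R⁻¹ *ᵥ u) + (4 / q ^ 2) * G ^ 2 * (u ⬝ᵥ S⁻¹ *ᵥ (y - a))
          + (-(2 * (dY : ℝ) * G)) := by ring
    rw [he]
    refine (abs_add_three _ _ _).trans ?_
    rw [abs_neg]
    have e1 : |G * (u ⬝ᵥ R⁻¹ *ᵥ u)| = G * |u ⬝ᵥ R⁻¹ *ᵥ u| := by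
      rw [abs_mul, abs_of_nonneg hG0]
    have e2 : |(4 / q ^ 2) * G ^ 2 * (u ⬝ᵥ S⁻¹ *ᵥ (y - a))|
        = (4 / q ^ 2) * G ^ 2 * |u ⬝ᵥ S⁻¹ *ᵥ (y - a)| := by
      rw [abs_mul, abs_of_nonneg (by positivity : (0:ℝ) ≤ (4 / q ^ 2) * G ^ 2)]
    have e3 : |2 * (dY : ℝ) * G| = 2 * (dY : ℝ) * G := by
      rw [abs_of_nonneg (by positivity)]
    rw [e1, e2, e3]
  refine habs.trans ?_
  -- the two key polynomial bounds
  have hAs0 : (0:ℝ) ≤ A + s := by linarith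
  have hGX2 : G * (t + (A + s)) ^ 2 ≤ cQ + 2 * (1 + cQ) * (A + s) + (A + s) ^ 2 := by
    have f2 : G * t * (A + s) ≤ (1 + cQ) * (A + s) :=
      mul_le_mul_of_nonneg_right hGt hAs0
    have f3 : G * (A + s) ^ 2 ≤ (A + s) ^ 2 :=
      mul_le_of_le_one_left (sq_nonneg _) hG1
    nlinarith [hGt2, f2, f3]
  have hGXt : G ^ 2 * ((t + (A + s)) * t) ≤ cQ + (1 + cQ) * (A + s) := by
    have g1 : G * (G * t ^ 2) ≤ cQ :=
      le_trans (mul_le_of_le_one_left (by positivity) hG1) hGt2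
    have g2 : (G * t) * (G * (A + s)) ≤ (1 + cQ) * (A + s) := by
      have hga : G * (A + s) ≤ A + s := mul_le_of_le_one_left hAs0 hG1
      have := mul_le_mul hGt hga (by positivity) (by linarith)
      linarith
    nlinarith [g1, g2]
  have p1 : G * |u ⬝ᵥ R⁻¹ *ᵥ u|
      ≤ NR * (cQ + 2 * (1 + cQ) * (A + s) + (A + s) ^ 2) := by
    have s1 : G * |u ⬝ᵥ R⁻¹ *ᵥ u| ≤ G * (NR * ‖ee u‖ * ‖ee u‖) :=
      mul_le_mul_of_nonneg_left hb1 hG0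
    have s2 : G * (NR * ‖ee u‖ * ‖ee u‖) = NR * (G * ‖ee u‖ ^ 2) := by ring
    have s3 : G * ‖ee u‖ ^ 2 ≤ G * (t + (A + s)) ^ 2 :=
      mul_le_mul_of_nonneg_left (pow_le_pow_left₀ hueenn hule 2) hG0
    calc G * |u ⬝ᵥ R⁻¹ *ᵥ u| ≤ NR * (G * ‖ee u‖ ^ 2) := by rw [← s2]; exact s1
      _ ≤ NR * (G * (t + (A + s)) ^ 2) := mul_le_mul_of_nonneg_left s3 hNR0
      _ ≤ NR * (cQ + 2 * (1 + cQ) * (A + s) + (A + s) ^ 2) :=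
          mul_le_mul_of_nonneg_left hGX2 hNR0
  have p2 : (4 / q ^ 2) * G ^ 2 * |u ⬝ᵥ S⁻¹ *ᵥ (y - a)|
      ≤ (4 * NB / q ^ 2) * (cQ + (1 + cQ) * (A + s)) := by
    have hc0 : (0:ℝ) ≤ (4 / q ^ 2) * G ^ 2 := by positivity
    have s1 : (4 / q ^ 2) * G ^ 2 * |u ⬝ᵥ S⁻¹ *ᵥ (y - a)|
        ≤ (4 / q ^ 2) * G ^ 2 * (NB * ‖ee u‖ * t) :=
      mul_le_mul_of_nonneg_left hb2 hc0
    have s3 : ‖ee u‖ * t ≤ (t + (A + s)) * t :=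
      mul_le_mul_of_nonneg_right hule ht0
    have s4 : G ^ 2 * (‖ee u‖ * t) ≤ G ^ 2 * ((t + (A + s)) * t) :=
      mul_le_mul_of_nonneg_left s3 (by positivity)
    have s5 : G ^ 2 * (‖ee u‖ * t) ≤ cQ + (1 + cQ) * (A + s) := s4.trans hGXt
    calc (4 / q ^ 2) * G ^ 2 * |u ⬝ᵥ S⁻¹ *ᵥ (y - a)|
        ≤ (4 / q ^ 2) * G ^ 2 * (NB * ‖ee u‖ * t) := s1
      _ = (4 * NB / q ^ 2) * (G ^ 2 * (‖ee u‖ * t)) := by ring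
      _ ≤ (4 * NB / q ^ 2) * (cQ + (1 + cQ) * (A + s)) := by
          apply mul_le_mul_of_nonneg_left s5 (by positivity)
  have p3 : 2 * (dY : ℝ) * G ≤ 2 * (dY : ℝ) := by
    have := mul_le_mul_of_nonneg_left hG1 edY
    simpa using this
  have hsum : G * |u ⬝ᵥ R⁻¹ *ᵥ u| + (4 / q ^ 2) * G ^ 2 * |u ⬝ᵥ S⁻¹ *ᵥ (y - a)|
      + 2 * (dY : ℝ) * G
      ≤ NR * (cQ + 2 * (1 + cQ) * (A + s) + (A + s) ^ 2)
        + (4 * NB / q ^ 2) * (cQ + (1 + cQ) * (A + s)) + 2 * (dY : ℝ) := by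
    linarith
  refine hsum.trans (le_of_eq ?_)
  ring
end

section
/- Let d ≥ 1 be an integer, q > 0, and let Z be a nonnegative real-valued random variable with E[Z] = d and Var(Z) = 2d (as holds when Z is chi-square distributed with d degrees of freedom). Let g(z) = 2(1 + z/q²)⁻¹. Then 2(1 + d/q²)⁻¹ ≤ E[g(Z)] ≤ 2(1 + d/q²)⁻¹ + √8 · √d / q². In particular, for the default choice q² = d one obtains 1 ≤ E[g(Z)] ≤ 1 + √(8/d), so that E[g(Z)] tends to 1 as d → ∞: the analysis precision increase of the diffusion score matching update is asymptotically unbiased relative to the regular Kalman update in the high-dimensional observation limit. -/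
open MeasureTheory

private lemma tangent_aux (a b : ℝ) (ha : 0 < a) (hb : 0 < b) :
    2 * b⁻¹ - 2 * (a - b) / b ^ 2 ≤ 2 * a⁻¹ := by
  have key : 2 * a⁻¹ - (2 * b⁻¹ - 2 * (a - b) / b ^ 2) = 2 * (a - b) ^ 2 / (a * b ^ 2) := by
    field_simp
    ring
  nlinarith [div_nonneg (by positivity : (0:ℝ) ≤ 2 * (a - b)^2)
    (by positivity : (0:ℝ) ≤ a * b^2)]

private lemma upper_aux (a b : ℝ) (ha : 1 ≤ a) (hb : 1 ≤ b) :
    2 * a⁻¹ ≤ 2 * b⁻¹ + 2 * |a - b| := by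
  have ha0 : 0 < a := lt_of_lt_of_le one_pos ha
  have hb0 : 0 < b := lt_of_lt_of_le one_pos hb
  rcases le_total b a with h | h
  · have h2 : 2 * a⁻¹ ≤ 2 * b⁻¹ := by gcongr
    nlinarith [abs_nonneg (a - b)]
  · have habs : |a - b| = b - a := by rw [abs_of_nonpos (by linarith)]; ring
    rw [habs]
    have hab : 1 ≤ a * b := by nlinarith
    have key : 2 * b⁻¹ + 2 * (b - a) - 2 * a⁻¹ = 2 * (b - a) * (a * b - 1) / (a * b) := by
      field_simp
      ring
    have h1 : 0 ≤ 2 * (b - a) * (a * b - 1) / (a * b) := by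
      apply div_nonneg _ (by positivity)
      nlinarith
    linarith

/-- Bounds on the expected weight factor `E[2(1 + Z/q²)⁻¹]` for a nonnegative random
variable with mean `d` and variance `2d` (e.g. chi-square with `d` degrees of freedom);
in particular, for the default choice `q² = d`, `1 ≤ E[g Z] ≤ 1 + √(8/d)`, so the
analysis precision update is asymptotically unbiased in high observation dimension. -/
theorem expected_weight_bounds
    {Ω : Type*} [MeasurableSpace Ω] (μ : Measure Ω) [IsProbabilityMeasure μ]
    (d : ℕ) (hd : 1 ≤ d) (q : ℝ) (hq : 0 < q)
    (Z : Ω → ℝ) (hZnn : ∀ ω, 0 ≤ Z ω) (hZmeas : Measurable Z)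
    (hZint : Integrable Z μ) (hZsqint : Integrable (fun ω => (Z ω) ^ 2) μ)
    (hmean : ∫ ω, Z ω ∂μ = d)
    (hvar : ∫ ω, (Z ω - d) ^ 2 ∂μ = 2 * d)
    (g : ℝ → ℝ) (hg : g = fun z => 2 * (1 + z / q ^ 2)⁻¹) :
    (2 * (1 + (d : ℝ) / q ^ 2)⁻¹ ≤ ∫ ω, g (Z ω) ∂μ ∧
      ∫ ω, g (Z ω) ∂μ ≤ 2 * (1 + (d : ℝ) / q ^ 2)⁻¹ + Real.sqrt 8 * Real.sqrt d / q ^ 2) ∧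
    (q ^ 2 = d →
      1 ≤ ∫ ω, g (Z ω) ∂μ ∧ ∫ ω, g (Z ω) ∂μ ≤ 1 + Real.sqrt (8 / d)) := by
  have hq2 : (0:ℝ) < q ^ 2 := by positivity
  have hdpos : (0:ℝ) < d := by exact_mod_cast hd
  set b : ℝ := 1 + (d : ℝ) / q ^ 2 with hb_def
  have hb1 : 1 ≤ b := by
    have h0 : 0 ≤ (d:ℝ) / q^2 := by positivity
    simp only [hb_def]; linarith
  have hb0 : 0 < b := lt_of_lt_of_le one_pos hb1
  have ha1 : ∀ ω, 1 ≤ 1 + Z ω / q ^ 2 := fun ω => by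
    have h1 := hZnn ω
    have h2 : 0 ≤ Z ω / q ^ 2 := by positivity
    linarith
  have ha0 : ∀ ω, 0 < 1 + Z ω / q ^ 2 := fun ω => lt_of_lt_of_le one_pos (ha1 ω)
  -- integrability of g ∘ Z
  have hgmeas : Measurable (fun ω => g (Z ω)) := by
    rw [hg]; fun_prop
  have hgint : Integrable (fun ω => g (Z ω)) μ := by
    refine (integrable_const (2:ℝ)).mono' hgmeas.aestronglyMeasurable ?_
    filter_upwards with ω
    rw [hg]
    simp only
    have hpos : (0:ℝ) < 2 * (1 + Z ω / q ^ 2)⁻¹ :=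
      mul_pos two_pos (inv_pos.mpr (ha0 ω))
    rw [Real.norm_eq_abs, abs_of_nonneg hpos.le]
    have h1 := ha1 ω
    have h2 : (1 + Z ω / q^2)⁻¹ ≤ 1 := by
      rw [inv_le_one_iff₀]; right; exact h1
    linarith
  -- integrability of (Z - d)^2 and |Z - d|
  have hsq_int : Integrable (fun ω => (Z ω - d) ^ 2) μ := by
    have heq : (fun ω => (Z ω - d) ^ 2) =
        fun ω => (Z ω)^2 - (2*d) * Z ω + (d:ℝ)^2 := by funext ω; ring
    rw [heq]
    exact (hZsqint.sub (hZint.const_mul _)).add (integrable_const _)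
  have habs_int : Integrable (fun ω => |Z ω - d|) μ := (hZint.sub (integrable_const _)).abs
  -- E|Z-d| ≤ sqrt(2d)
  set m : ℝ := ∫ ω, |Z ω - d| ∂μ with hm_def
  have hm0 : 0 ≤ m := integral_nonneg fun ω => abs_nonneg _
  have hcm_int : Integrable (fun ω => (2*m) * |Z ω - d|) μ := habs_int.const_mul _
  have hsub_int : Integrable (fun ω => (Z ω - d)^2 - (2*m) * |Z ω - d|) μ :=
    hsq_int.sub hcm_int
  have hm_sq : m ^ 2 ≤ 2 * d := by
    have hnn : 0 ≤ ∫ ω, ((Z ω - d)^2 - (2*m) * |Z ω - d| + m^2) ∂μ := by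
      rw [show (fun ω => (Z ω - d)^2 - (2*m) * |Z ω - d| + m^2)
          = fun ω => (|Z ω - d| - m)^2 from funext fun ω => by
            have hsq : |Z ω - d| ^ 2 = (Z ω - d) ^ 2 := sq_abs _
            nlinarith [hsq]]
      exact integral_nonneg fun ω => sq_nonneg _
    rw [integral_add hsub_int (integrable_const _),
        integral_sub hsq_int hcm_int, integral_const_mul, hvar,
        integral_const] at hnn
    simp only [probReal_univ, smul_eq_mul, one_mul] at hnn
    nlinarith [hnn]
  have hm_le : m ≤ Real.sqrt (2 * d) :=
    (Real.le_sqrt hm0 (by positivity)).mpr hm_sq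
  -- sqrt facts
  have hsqrt8 : Real.sqrt 8 = 2 * Real.sqrt 2 := by
    rw [show (8:ℝ) = 2^2 * 2 by norm_num, Real.sqrt_mul (by positivity),
      Real.sqrt_sq (by norm_num)]
  have hsqrt2d : Real.sqrt (2 * d) = Real.sqrt 2 * Real.sqrt d :=
    Real.sqrt_mul (by norm_num) _
  -- lower bound
  have hZd_int : Integrable (fun ω => Z ω - d) μ := hZint.sub (integrable_const _)
  have hZd_mean : ∫ ω, (Z ω - d) ∂μ = 0 := by
    rw [integral_sub hZint (integrable_const _), hmean, integral_const, probReal_univ,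
      smul_eq_mul, one_mul, sub_self]
  have hlow : 2 * b⁻¹ ≤ ∫ ω, g (Z ω) ∂μ := by
    set c : ℝ := 2 / (q^2 * b^2) with hc_def
    have hc_int : Integrable (fun ω => c * (Z ω - d)) μ := hZd_int.const_mul _
    have hlin_int : Integrable (fun ω => 2 * b⁻¹ - c * (Z ω - d)) μ :=
      (integrable_const _).sub hc_int
    have hpt : ∀ ω, 2 * b⁻¹ - c * (Z ω - d) ≤ g (Z ω) := by
      intro ω
      have ht := tangent_aux (1 + Z ω / q^2) b (ha0 ω) hb0
      have heq : 2 * ((1 + Z ω / q^2) - b) / b^2 = c * (Z ω - d) := by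
        rw [hc_def, hb_def]
        field_simp
        ring
      rw [heq] at ht
      rw [hg]
      exact ht
    have hc_mean : ∫ ω, c * (Z ω - d) ∂μ = 0 := by
      rw [integral_const_mul, hZd_mean, mul_zero]
    have hle := integral_mono hlin_int hgint hpt
    rwa [integral_sub (integrable_const _) hc_int, hc_mean, sub_zero, integral_const,
      probReal_univ, one_smul] at hle
  -- upper bound
  have hup : ∫ ω, g (Z ω) ∂μ ≤ 2 * b⁻¹ + Real.sqrt 8 * Real.sqrt d / q ^ 2 := by
    have habs_int' : Integrable (fun ω => (2 / q^2) * |Z ω - d|) μ := habs_int.const_mul _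
    have hpt : ∀ ω, g (Z ω) ≤ 2 * b⁻¹ + (2 / q^2) * |Z ω - d| := by
      intro ω
      have hu := upper_aux (1 + Z ω / q^2) b (ha1 ω) hb1
      have heq : 2 * |(1 + Z ω / q^2) - b| = (2 / q^2) * |Z ω - d| := by
        rw [hb_def, show (1 + Z ω / q^2) - (1 + (d:ℝ)/q^2) = (Z ω - d) / q^2 by ring,
          abs_div, abs_of_pos hq2]
        ring
      rw [heq] at hu
      rw [hg]
      exact hu
    have hub_int : Integrable (fun ω => 2 * b⁻¹ + (2 / q^2) * |Z ω - d|) μ :=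
      (integrable_const _).add habs_int'
    have hle := integral_mono hgint hub_int hpt
    have habs_val : ∫ ω, (2 / q^2) * |Z ω - d| ∂μ = (2 / q^2) * m := integral_const_mul _ _
    rw [integral_add (integrable_const _) habs_int', habs_val, integral_const,
      probReal_univ, one_smul] at hle
    have hfin : (2 / q^2) * m ≤ Real.sqrt 8 * Real.sqrt d / q ^ 2 := by
      rw [hsqrt8]
      have h2m : 2 * m ≤ 2 * Real.sqrt 2 * Real.sqrt d := by
        calc 2 * m ≤ 2 * Real.sqrt (2 * d) := by linarith
        _ = 2 * Real.sqrt 2 * Real.sqrt d := by rw [hsqrt2d]; ring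
      calc (2 / q^2) * m = 2 * m / q^2 := by ring
      _ ≤ 2 * Real.sqrt 2 * Real.sqrt d / q^2 := by gcongr
    linarith
  refine ⟨⟨hlow, hup⟩, fun hq2d => ?_⟩
  have hbval : b = 2 := by
    rw [hb_def, hq2d, div_self (ne_of_gt hdpos)]; norm_num
  have hb2 : 2 * b⁻¹ = 1 := by rw [hbval]; norm_num
  have hsd0 : Real.sqrt d ≠ 0 := ne_of_gt (Real.sqrt_pos.mpr hdpos)
  have hsd : Real.sqrt d * Real.sqrt d = (d:ℝ) := Real.mul_self_sqrt hdpos.le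
  have hsqd : Real.sqrt 8 * Real.sqrt d / (d:ℝ) = Real.sqrt (8 / d) := by
    rw [Real.sqrt_div (by norm_num : (0:ℝ) ≤ 8), ← hsd]
    field_simp
    rw [Real.sqrt_sq (Real.sqrt_nonneg _)]
  constructor
  · linarith [hlow, hb2.symm.le]
  · have h2 : Real.sqrt 8 * Real.sqrt d / q ^ 2 = Real.sqrt (8/d) := by
      rw [hq2d]; exact hsqd
    rw [hb2, h2] at hup
    exact hup
end

section
/- Let M ≥ 2 be an integer, X a d_X × M real matrix, H a d_Y × d_X real matrix, and N a symmetric positive definite d_Y × d_Y real matrix. Set P = (1/(M−1)) X Xᵀ, K = P Hᵀ (H P Hᵀ + N)⁻¹, and T = I_M − (1/(M−1)) (H X)ᵀ (H P Hᵀ + N)⁻¹ (H X). Then: (i) T is symmetric positive semidefinite; and (ii) (1/(M−1)) X T Xᵀ = P − K H P. Consequently, transforming the ensemble anomaly matrix X by the positive square root of T yields an analysis ensemble whose empirical covariance equals the diffusion score matching analysis covariance P − K H P. -/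
open Matrix

private lemma posSemidef_smul_real {n : Type*} [Fintype n] {A : Matrix n n ℝ}
    (hA : A.PosSemidef) {c : ℝ} (hc : 0 ≤ c) : (c • A).PosSemidef := by
  refine .of_dotProduct_mulVec_nonneg ?_ fun x => ?_
  · unfold Matrix.IsHermitian
    rw [conjTranspose_smul, hA.1.eq, star_trivial]
  · rw [smul_mulVec, dotProduct_smul, smul_eq_mul]
    exact mul_nonneg hc (hA.dotProduct_mulVec_nonneg x)

/-- Ensemble square root transform: with empirical covariance `P = (1/(M−1)) X Xᵀ`, gain
`K = P Hᵀ (H P Hᵀ + N)⁻¹` and transform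
`T = I − (1/(M−1)) (H X)ᵀ (H P Hᵀ + N)⁻¹ (H X)`, the matrix `T` is symmetric positive
semidefinite and `(1/(M−1)) • X T Xᵀ = P − K H P`. -/
theorem esrf_transform {dX dY : ℕ} (M : ℕ) (hM : 2 ≤ M)
    (X : Matrix (Fin dX) (Fin M) ℝ)
    (H : Matrix (Fin dY) (Fin dX) ℝ)
    (N : Matrix (Fin dY) (Fin dY) ℝ) (hN : N.PosDef)
    (P : Matrix (Fin dX) (Fin dX) ℝ) (hP : P = (1 / ((M : ℝ) - 1)) • (X * Xᵀ))
    (K : Matrix (Fin dX) (Fin dY) ℝ) (hK : K = P * Hᵀ * (H * P * Hᵀ + N)⁻¹)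
    (T : Matrix (Fin M) (Fin M) ℝ)
    (hT : T = 1 - (1 / ((M : ℝ) - 1)) • ((H * X)ᵀ * (H * P * Hᵀ + N)⁻¹ * (H * X))) :
    T.PosSemidef ∧ (1 / ((M : ℝ) - 1)) • (X * T * Xᵀ) = P - K * H * P := by
  have h2 : (2 : ℝ) ≤ (M : ℝ) := by exact_mod_cast hM
  set c : ℝ := 1 / ((M : ℝ) - 1) with hc
  have hcpos : 0 < c := by
    apply div_pos one_pos; linarith
  set A : Matrix (Fin dY) (Fin M) ℝ := H * X with hAdef
  set S : Matrix (Fin dY) (Fin dY) ℝ := H * P * Hᵀ + N with hSdef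
  -- P is positive semidefinite
  have hXX : (X * Xᵀ).PosSemidef := by
    have := posSemidef_self_mul_conjTranspose X
    simpa using this
  have hPsd : P.PosSemidef := hP ▸ posSemidef_smul_real hXX hcpos.le
  -- S = H P Hᵀ + N is positive definite
  have hHPH : (H * P * Hᵀ).PosSemidef := by
    have := hPsd.mul_mul_conjTranspose_same H
    simpa [Matrix.mul_assoc] using this
  have hSpd : S.PosDef := Matrix.PosDef.posSemidef_add hHPH hN
  have hSinvpd : S⁻¹.PosDef := hSpd.inv
  have hSS : S⁻¹ * S = 1 := Matrix.nonsing_inv_mul S (isUnit_iff_ne_zero.mpr hSpd.det_pos.ne')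
  have hNN : N * N⁻¹ = 1 := Matrix.mul_nonsing_inv N (isUnit_iff_ne_zero.mpr hN.det_pos.ne')
  -- S rewritten via A
  have hSA : S = N + c • (A * Aᵀ) := by
    rw [hSdef, hP, hAdef]
    rw [add_comm]
    congr 1
    simp [Matrix.smul_mul, Matrix.mul_smul, Matrix.transpose_mul, Matrix.mul_assoc]
  -- key Woodbury-type identity
  have key : Aᵀ * (S⁻¹ * A) + c • (Aᵀ * (S⁻¹ * (A * (Aᵀ * (N⁻¹ * A))))) = Aᵀ * (N⁻¹ * A) := by
    have h1 : N * (N⁻¹ * A) = A := by rw [← Matrix.mul_assoc, hNN, Matrix.one_mul]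
    calc Aᵀ * (S⁻¹ * A) + c • (Aᵀ * (S⁻¹ * (A * (Aᵀ * (N⁻¹ * A)))))
        = Aᵀ * (S⁻¹ * (S * (N⁻¹ * A))) := by
          rw [hSA]
          simp only [Matrix.add_mul, Matrix.smul_mul, Matrix.mul_add, Matrix.mul_smul,
            smul_add, h1, Matrix.mul_assoc]
      _ = Aᵀ * (N⁻¹ * A) := by rw [← Matrix.mul_assoc S⁻¹, hSS, Matrix.one_mul]
  -- the explicit inverse of T
  set Q : Matrix (Fin M) (Fin M) ℝ := 1 + c • (Aᵀ * (N⁻¹ * A)) with hQdef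
  have hQpd : Q.PosDef := by
    refine Matrix.PosDef.add_posSemidef Matrix.PosDef.one ?_
    refine posSemidef_smul_real ?_ hcpos.le
    have := hN.inv.posSemidef.conjTranspose_mul_mul_same A
    simpa [Matrix.mul_assoc] using this
  have hTQ : T * Q = 1 := by
    have key' : c • (Aᵀ * (S⁻¹ * A)) + (c * c) • (Aᵀ * (S⁻¹ * (A * (Aᵀ * (N⁻¹ * A)))))
        = c • (Aᵀ * (N⁻¹ * A)) := by
      rw [← smul_smul, ← smul_add, key]
    rw [hT, hQdef]
    simp only [Matrix.sub_mul, Matrix.mul_add, Matrix.one_mul, Matrix.mul_one,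
      Matrix.smul_mul, Matrix.mul_smul, smul_smul, Matrix.mul_assoc]
    rw [smul_sub, smul_smul, ← key']
    abel
  have hTeq : T = Q⁻¹ := (Matrix.inv_eq_left_inv hTQ).symm
  constructor
  · rw [hTeq]; exact hQpd.inv.posSemidef
  · rw [hT, hK, hP]
    simp only [hAdef]
    simp only [Matrix.mul_sub, Matrix.sub_mul, Matrix.mul_one, Matrix.one_mul,
      Matrix.smul_mul, Matrix.mul_smul, smul_sub, smul_smul, Matrix.transpose_mul,
      Matrix.mul_assoc]
end

section
/- Let R be a symmetric positive definite d × d real matrix and q > 0, and define κ : ℝ^d → ℝ by κ(u) = (1 + uᵀ R⁻¹ u / q²)⁻¹ and φ : ℝ^d → ℝ by φ(u) = κ(u) · uᵀ R⁻¹ u − 2 (uᵀ ∇κ(u) + d · κ(u)). Then sup_{u ∈ ℝ^d} |φ(u)| < ∞. Consequently, for any function h : ℝ^{d_X} → ℝ^d, the diffusion score matching potential G(y | x) = exp(−φ(y − h(x))) satisfies 0 < inf_{x,y} G(y | x) and sup_{x,y} G(y | x) < ∞, i.e. the potential of the diffusion score matching particle filter with Gaussian observation error and translation-invariant inverse multiquadric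 weight kernel is bounded and bounded away from zero. -/
open Matrix

lemma clm_sum_single {d : ℕ} (T : (Fin d → ℝ) →L[ℝ] ℝ) (u : Fin d → ℝ) :
    ∑ i, u i * T (Pi.single i 1) = T u := by
  have hu : u = ∑ i, u i • (Pi.single i 1 : Fin d → ℝ) := by
    funext j
    simp [Pi.single_apply, Finset.sum_apply]
  conv_rhs => rw [hu]
  rw [map_sum]
  simp [smul_eq_mul]

lemma quad_hasFDerivAt {d : ℕ} (A : Matrix (Fin d) (Fin d) ℝ) (u : Fin d → ℝ) :
    HasFDerivAt (fun v : Fin d → ℝ => v ⬝ᵥ A.mulVec v)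
      (∑ i, ∑ j, A i j • (u i • (ContinuousLinearMap.proj j : (Fin d → ℝ) →L[ℝ] ℝ)
        + u j • (ContinuousLinearMap.proj i : (Fin d → ℝ) →L[ℝ] ℝ))) u := by
  have key : ∀ i j : Fin d, HasFDerivAt (fun v : Fin d → ℝ => A i j * (v i * v j))
      (A i j • (u i • (ContinuousLinearMap.proj j : (Fin d → ℝ) →L[ℝ] ℝ)
        + u j • (ContinuousLinearMap.proj i : (Fin d → ℝ) →L[ℝ] ℝ))) u := by
    intro i j
    have hi : HasFDerivAt (fun v : Fin d → ℝ => v i)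
        (ContinuousLinearMap.proj i : (Fin d → ℝ) →L[ℝ] ℝ) u := hasFDerivAt_apply i u
    have hj : HasFDerivAt (fun v : Fin d → ℝ => v j)
        (ContinuousLinearMap.proj j : (Fin d → ℝ) →L[ℝ] ℝ) u := hasFDerivAt_apply j u
    exact (hi.mul hj).const_mul (A i j)
  have hsum := HasFDerivAt.fun_sum (fun i (_ : i ∈ Finset.univ) =>
    HasFDerivAt.fun_sum (fun j (_ : j ∈ Finset.univ) => key i j))
  have hfun : (fun v : Fin d → ℝ => v ⬝ᵥ A.mulVec v)
      = fun v => ∑ i, ∑ j, A i j * (v i * v j) := by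
    funext v
    simp only [dotProduct, mulVec, Finset.mul_sum]
    exact Finset.sum_congr rfl fun i _ => Finset.sum_congr rfl fun j _ => by ring
  rw [hfun]
  exact hsum

lemma quad_deriv_apply {d : ℕ} (A : Matrix (Fin d) (Fin d) ℝ) (u : Fin d → ℝ) :
    (∑ i, ∑ j, A i j • (u i • (ContinuousLinearMap.proj j : (Fin d → ℝ) →L[ℝ] ℝ)
        + u j • (ContinuousLinearMap.proj i : (Fin d → ℝ) →L[ℝ] ℝ))) u
      = 2 * (u ⬝ᵥ A.mulVec u) := by
  simp only [ContinuousLinearMap.coe_sum', Finset.sum_apply, ContinuousLinearMap.add_apply,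
    ContinuousLinearMap.coe_smul', Pi.smul_apply, ContinuousLinearMap.proj_apply,
    smul_eq_mul, dotProduct, mulVec, Finset.mul_sum]
  exact Finset.sum_congr rfl fun i _ => Finset.sum_congr rfl fun j _ => by ring

lemma abs_phi_bound (q2 dd k : ℝ) (hq2 : 0 < q2) (hd0 : 0 ≤ dd)
    (hk0 : 0 < k) (hk1 : k ≤ 1) :
    |(1 - k) * q2 + 4 * (k - k ^ 2) - 2 * dd * k| ≤ q2 + 4 + 2 * dd := by
  rw [abs_le]
  constructor
  · nlinarith [sq_nonneg k, mul_nonneg hk0.le hd0, mul_nonneg (sub_nonneg.2 hk1) hq2.le]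
  · nlinarith [sq_nonneg k, mul_nonneg hk0.le hd0, mul_nonneg (sub_nonneg.2 hk1) hq2.le]

/-- Boundedness of the diffusion score matching potential for a Gaussian observation
error with translation-invariant IMQ weight kernel: the loss `φ` is uniformly bounded,
hence for any observation operator `h` the potential `G(y|x) = exp(−φ(y − h x))` is
bounded and bounded away from zero. -/
theorem dsm_potential_bounded {d dX : ℕ}
    (R : Matrix (Fin d) (Fin d) ℝ) (hR : R.PosDef) (q : ℝ) (hq : 0 < q)
    (κ : (Fin d → ℝ) → ℝ)
    (hκ : κ = fun u => (1 + (u ⬝ᵥ R⁻¹.mulVec u) / q ^ 2)⁻¹)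
    (gκ : (Fin d → ℝ) → Fin d → ℝ)
    (hgκ : gκ = fun u i => fderiv ℝ κ u (Pi.single i 1))
    (φ : (Fin d → ℝ) → ℝ)
    (hφ : φ = fun u => κ u * (u ⬝ᵥ R⁻¹.mulVec u) - 2 * ((u ⬝ᵥ gκ u) + (d : ℝ) * κ u))
    (h : (Fin dX → ℝ) → Fin d → ℝ)
    (G : (Fin dX → ℝ) → (Fin d → ℝ) → ℝ)
    (hG : G = fun x y => Real.exp (-(φ (y - h x)))) :
    (∃ C : ℝ, ∀ u, |φ u| ≤ C) ∧
    (∃ ε Cu : ℝ, 0 < ε ∧ ∀ x y, ε ≤ G x y ∧ G x y ≤ Cu) := by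
  have hq2 : (0:ℝ) < q ^ 2 := by positivity
  have hbound : ∀ u, |φ u| ≤ q ^ 2 + 4 + 2 * d := by
    intro u
    set t : ℝ := u ⬝ᵥ R⁻¹.mulVec u with ht_def
    have ht : 0 ≤ t := by
      simpa using hR.inv.posSemidef.dotProduct_mulVec_nonneg u
    set s : ℝ := 1 + t / q ^ 2 with hs_def
    have hs1 : 1 ≤ s := by
      have : 0 ≤ t / q ^ 2 := div_nonneg ht hq2.le
      simp [hs_def]; linarith
    have hs0 : 0 < s := lt_of_lt_of_le one_pos hs1
    have hsne : s ≠ 0 := hs0.ne'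
    -- derivative of the quadratic form
    set L := (∑ i, ∑ j, R⁻¹ i j • (u i • (ContinuousLinearMap.proj j : (Fin d → ℝ) →L[ℝ] ℝ)
        + u j • (ContinuousLinearMap.proj i : (Fin d → ℝ) →L[ℝ] ℝ))) with hL_def
    have hquad := quad_hasFDerivAt R⁻¹ u
    -- derivative of the inner map g v = 1 + (v ⬝ᵥ R⁻¹ v)/q²
    have hg : HasFDerivAt (fun v : Fin d → ℝ => 1 + (v ⬝ᵥ R⁻¹.mulVec v) / q ^ 2)
        ((q ^ 2)⁻¹ • L) u := by
      have h1 := (hquad.const_mul ((q ^ 2)⁻¹)).const_add 1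
      have h2 : (fun v : Fin d → ℝ => 1 + (q ^ 2)⁻¹ * (v ⬝ᵥ R⁻¹.mulVec v))
          = fun v => 1 + (v ⬝ᵥ R⁻¹.mulVec v) / q ^ 2 := by
        funext v; rw [div_eq_inv_mul]
      rw [← h2]
      exact h1
    -- derivative of κ
    have hκd : HasFDerivAt κ ((-(s ^ 2)⁻¹) • ((q ^ 2)⁻¹ • L)) u := by
      rw [hκ]
      exact (hasDerivAt_inv hsne).comp_hasFDerivAt_of_eq u hg (by rw [hs_def, ht_def])
    have hfde : fderiv ℝ κ u = (-(s ^ 2)⁻¹) • ((q ^ 2)⁻¹ • L) := hκd.fderiv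
    have hLu : L u = 2 * t := by rw [hL_def, ht_def]; exact quad_deriv_apply R⁻¹ u
    -- value of u ⬝ᵥ gκ u
    have hdot : u ⬝ᵥ gκ u = -(s ^ 2)⁻¹ * ((q ^ 2)⁻¹ * (2 * t)) := by
      have h1 : u ⬝ᵥ gκ u = (fderiv ℝ κ u) u := by
        rw [hgκ]
        simpa [dotProduct] using clm_sum_single (fderiv ℝ κ u) u
      rw [h1, hfde]
      simp only [ContinuousLinearMap.smul_apply, smul_eq_mul]
      rw [hLu]
    have hκval : κ u = s⁻¹ := by rw [hκ, hs_def, ht_def]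
    have hφu : φ u = s⁻¹ * t - 2 * (-(s ^ 2)⁻¹ * ((q ^ 2)⁻¹ * (2 * t)) + (d : ℝ) * s⁻¹) := by
      rw [hφ]
      simp only
      rw [hdot, hκval, ht_def]
    -- rewrite using k = s⁻¹
    set k : ℝ := s⁻¹ with hk_def
    have hks : k * s = 1 := inv_mul_cancel₀ hsne
    have hk0 : 0 < k := inv_pos.2 hs0
    have hk1 : k ≤ 1 := by
      rw [hk_def]
      exact inv_le_one_of_one_le₀ hs1
    have htq : t = (s - 1) * q ^ 2 := by
      have h0 : s - 1 = t / q ^ 2 := by rw [hs_def]; ring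
      rw [h0]; field_simp
    have e1 : k * t = (1 - k) * q ^ 2 := by
      rw [htq]; linear_combination q ^ 2 * hks
    have e2 : (s ^ 2)⁻¹ * ((q ^ 2)⁻¹ * (2 * t)) = 2 * (k - k ^ 2) := by
      have hsq : (s ^ 2)⁻¹ = k ^ 2 := by rw [hk_def, inv_pow]
      rw [hsq, htq]
      have hq2ne : (q ^ 2 : ℝ) ≠ 0 := hq2.ne'
      have hqq : (q ^ 2)⁻¹ * q ^ 2 = 1 := inv_mul_cancel₀ hq2ne
      linear_combination (2 * k ^ 2 * (s - 1)) * hqq + (2 * k) * hks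
    have hφu2 : φ u = (1 - k) * q ^ 2 + 4 * (k - k ^ 2) - 2 * (d : ℝ) * k := by
      rw [hφu]
      have h3 : -(s ^ 2)⁻¹ * ((q ^ 2)⁻¹ * (2 * t)) = -(2 * (k - k ^ 2)) := by
        rw [← e2]; ring
      rw [h3]
      have h4 : s⁻¹ * t = (1 - k) * q ^ 2 := e1
      rw [h4]; ring
    have hd0 : (0:ℝ) ≤ (d : ℝ) := Nat.cast_nonneg d
    rw [hφu2]
    exact abs_phi_bound (q ^ 2) (d : ℝ) k hq2 hd0 hk0 hk1
  refine ⟨⟨q ^ 2 + 4 + 2 * d, hbound⟩, Real.exp (-(q ^ 2 + 4 + 2 * d)), Real.exp (q ^ 2 + 4 + 2 * d),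
    Real.exp_pos _, fun x y => ?_⟩
  have hb := hbound (y - h x)
  rw [abs_le] at hb
  rw [hG]
  constructor
  · exact Real.exp_le_exp.2 (by linarith [hb.2])
  · exact Real.exp_le_exp.2 (by linarith [hb.1])
end
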